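/- arXiv:0908.4316 — 2 statements merged into one kernel-verified Lean document; each statement's English description precedes it below -/
import Mathlib

section
/- Fix an integer n ≥ 2 and constants a₁,…,aₙ ∈ ℂ. For every smooth function f : Ω → ℂ, Σⱼ₌₁ⁿ Kⱼ f = r⁴ · Hf on Ω. In particular, if Hf = 0 on Ω then Σⱼ₌₁ⁿ Kⱼ f = 0 on Ω. -/
noncomputable section

/-- The domain `Ω = {x ∈ ℝⁿ : x ≠ 0 and xⱼ ≠ 0 for all j}`. -/
def Omega (n : ℕ) : Set (Fin n → ℝ) := {x | x ≠ 0 ∧ ∀ j, x j ≠ 0}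

/-- Partial derivative `∂ⱼ f`. -/
def pd {n : ℕ} (j : Fin n) (f : (Fin n → ℝ) → ℂ) (x : Fin n → ℝ) : ℂ :=
  fderiv ℝ f x (Pi.single j 1)

/-- `r² = Σⱼ xⱼ²`. -/
def r2 {n : ℕ} (x : Fin n → ℝ) : ℝ := ∑ j, (x j) ^ 2

/-- The Euler operator `E = Σⱼ xⱼ ∂ⱼ`. -/
def Eop {n : ℕ} (f : (Fin n → ℝ) → ℂ) (x : Fin n → ℝ) : ℂ :=
  ∑ j, (x j : ℂ) * pd j f x

/-- The Hamiltonian `Hf = Σⱼ (∂ⱼ²f + (aⱼ/xⱼ²) f)`. -/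
def Hop {n : ℕ} (a : Fin n → ℂ) (f : (Fin n → ℝ) → ℂ) (x : Fin n → ℝ) : ℂ :=
  ∑ j, (pd j (pd j f) x + (a j / (x j : ℂ) ^ 2) * f x)

/-- The dilation operator `Df = −Ef − ((n−2)/2) f`. -/
def Dop {n : ℕ} (f : (Fin n → ℝ) → ℂ) (x : Fin n → ℝ) : ℂ :=
  -Eop f x - (((n : ℂ) - 2) / 2) * f x

/-- `Pⱼf = ∂ⱼ²f + (aⱼ/xⱼ²) f`. -/
def Pop {n : ℕ} (a : Fin n → ℂ) (j : Fin n) (f : (Fin n → ℝ) → ℂ)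
    (x : Fin n → ℝ) : ℂ :=
  pd j (pd j f) x + (a j / (x j : ℂ) ^ 2) * f x

/-- The rotation `xⱼ∂ₖ − xₖ∂ⱼ`. -/
def rot {n : ℕ} (j k : Fin n) (f : (Fin n → ℝ) → ℂ) (x : Fin n → ℝ) : ℂ :=
  (x j : ℂ) * pd k f x - (x k : ℂ) * pd j f x

/-- `J_{jk}f = (xⱼ∂ₖ − xₖ∂ⱼ)²f + (aⱼxₖ²/xⱼ² + aₖxⱼ²/xₖ²) f`. -/
def Jop {n : ℕ} (a : Fin n → ℂ) (j k : Fin n) (f : (Fin n → ℝ) → ℂ)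
    (x : Fin n → ℝ) : ℂ :=
  rot j k (rot j k f) x
    + (a j * (x k : ℂ) ^ 2 / (x j : ℂ) ^ 2
        + a k * (x j : ℂ) ^ 2 / (x k : ℂ) ^ 2) * f x

/-- `Mⱼf = (n−2)xⱼ f − r² ∂ⱼf + 2xⱼ Ef`. -/
def Mop {n : ℕ} (j : Fin n) (f : (Fin n → ℝ) → ℂ) (x : Fin n → ℝ) : ℂ :=
  ((n : ℂ) - 2) * (x j : ℂ) * f x - (r2 x : ℂ) * pd j f x
    + 2 * (x j : ℂ) * Eop f x

/-- `Kⱼf = Mⱼ(Mⱼf) + (aⱼ r⁴/xⱼ²) f`. -/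
def Kop {n : ℕ} (a : Fin n → ℂ) (j : Fin n) (f : (Fin n → ℝ) → ℂ)
    (x : Fin n → ℝ) : ℂ :=
  Mop j (Mop j f) x + (a j * (r2 x : ℂ) ^ 2 / (x j : ℂ) ^ 2) * f x

/-- The inversion (Kelvin-type) operator `(Iψ)(x) = r^{2−n} ψ(x/r²)`,
with `r^{2−n} = (r²)^{(2−n)/2}`. -/
def Iop {n : ℕ} (f : (Fin n → ℝ) → ℂ) (x : Fin n → ℝ) : ℂ :=
  (((r2 x) ^ (((2 : ℝ) - (n : ℝ)) / 2) : ℝ) : ℂ) * f ((r2 x)⁻¹ • x)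


section Helpers

open Finset


lemma isOpen_Omega (n : ℕ) : IsOpen (Omega n) := by
  have h : Omega n = {x : Fin n → ℝ | x ≠ 0} ∩ ⋂ j, {x | x j ≠ 0} := by
    ext x; simp [Omega, Set.mem_iInter]
  rw [h]
  exact isOpen_ne.inter (isOpen_iInter_of_finite fun j =>
    IsOpen.preimage (continuous_apply j) isOpen_ne)

variable {n : ℕ} {x : Fin n → ℝ}

lemma diff_coordC (k : Fin n) : DifferentiableAt ℝ (fun y : Fin n → ℝ => ((y k : ℝ) : ℂ)) x := by
  exact (Complex.ofRealCLM.comp (ContinuousLinearMap.proj k) : (Fin n → ℝ) →L[ℝ] ℂ).differentiableAt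

lemma pd_coordC (j k : Fin n) :
    pd j (fun y => ((y k : ℝ) : ℂ)) x = if k = j then 1 else 0 := by
  have h : (fun y : Fin n → ℝ => ((y k : ℝ) : ℂ))
      = (Complex.ofRealCLM.comp (ContinuousLinearMap.proj k) : (Fin n → ℝ) →L[ℝ] ℂ) := rfl
  unfold pd
  rw [h, ContinuousLinearMap.fderiv]
  simp [Pi.single_apply]
  split <;> simp

lemma pd_mul {g h : (Fin n → ℝ) → ℂ} (j : Fin n)
    (hg : DifferentiableAt ℝ g x) (hh : DifferentiableAt ℝ h x) :
    pd j (fun y => g y * h y) x = g x * pd j h x + h x * pd j g x := by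
  unfold pd
  rw [fderiv_fun_mul hg hh]
  simp

lemma pd_sum {ι : Type*} (s : Finset ι) (g : ι → (Fin n → ℝ) → ℂ) (j : Fin n)
    (hg : ∀ i ∈ s, DifferentiableAt ℝ (g i) x) :
    pd j (fun y => ∑ i ∈ s, g i y) x = ∑ i ∈ s, pd j (g i) x := by
  unfold pd
  rw [fderiv_fun_sum hg]
  simp

lemma pd_comb {A B C : (Fin n → ℝ) → ℂ} (j : Fin n)
    (hA : DifferentiableAt ℝ A x) (hB : DifferentiableAt ℝ B x) (hC : DifferentiableAt ℝ C x) :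
    pd j (fun y => A y - B y + C y) x = pd j A x - pd j B x + pd j C x := by
  unfold pd
  rw [fderiv_fun_add (hA.fun_sub hB) hC, fderiv_fun_sub hA hB]
  simp

lemma r2C_eq (y : Fin n → ℝ) : ((r2 y : ℝ) : ℂ) = ∑ k, ((y k : ℝ) : ℂ) ^ 2 := by
  unfold r2; push_cast; ring

lemma diff_r2C : DifferentiableAt ℝ (fun y : Fin n → ℝ => ((r2 y : ℝ) : ℂ)) x := by
  have h : (fun y : Fin n → ℝ => ((r2 y : ℝ) : ℂ)) = fun y => ∑ k, ((y k : ℝ) : ℂ) ^ 2 := by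
    funext y; exact r2C_eq y
  rw [h]
  exact DifferentiableAt.fun_sum fun k _ => (diff_coordC k).fun_pow 2

lemma pd_r2C (j : Fin n) : pd j (fun y => ((r2 y : ℝ) : ℂ)) x = 2 * (x j : ℂ) := by
  have h : (fun y : Fin n → ℝ => ((r2 y : ℝ) : ℂ))
      = fun y => ∑ k, (fun z : Fin n → ℝ => ((z k : ℝ) : ℂ)) y * (fun z : Fin n → ℝ => ((z k : ℝ) : ℂ)) y := by
    funext y; rw [r2C_eq]; apply Finset.sum_congr rfl; intro k _; ring
  rw [h, pd_sum _ _ j (fun k _ => (diff_coordC k).fun_mul (diff_coordC k))]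
  have h2 : ∀ k : Fin n, pd j (fun y => (fun z : Fin n → ℝ => ((z k : ℝ) : ℂ)) y * (fun z : Fin n → ℝ => ((z k : ℝ) : ℂ)) y) x
      = ((x k : ℝ):ℂ) * (if k = j then 1 else 0) + ((x k : ℝ):ℂ) * (if k = j then 1 else 0) := by
    intro k
    rw [pd_mul j (diff_coordC k) (diff_coordC k), pd_coordC]
  rw [Finset.sum_congr rfl fun k _ => h2 k]
  simp [mul_ite, Finset.sum_add_distrib, Finset.sum_ite_eq']
  ring

lemma pd_const_mul (c : ℂ) {g : (Fin n → ℝ) → ℂ} (j : Fin n)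
    (hg : DifferentiableAt ℝ g x) :
    pd j (fun y => c * g y) x = c * pd j g x := by
  unfold pd
  rw [fderiv_const_mul hg]
  simp

lemma main_sum (f : (Fin n → ℝ) → ℂ)
    (hfd : DifferentiableAt ℝ f x)
    (hud : ∀ k : Fin n, DifferentiableAt ℝ (pd k f) x) :
    ∑ j, Mop j (Mop j f) x = ((r2 x : ℝ) : ℂ) ^ 2 * ∑ j, pd j (pd j f) x := by
  have hR : (∑ k, (x k : ℂ) * (x k : ℂ)) = ((r2 x : ℝ) : ℂ) := by
    rw [r2C_eq]; exact Finset.sum_congr rfl fun k _ => (sq ((x k : ℂ))).symm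
  -- differentiability of Eop f
  have hErw : (Eop f) = fun y => ∑ l, (fun z : Fin n → ℝ => ((z l : ℝ) : ℂ) * pd l f z) y := rfl
  have hEd : DifferentiableAt ℝ (Eop f) x := by
    rw [hErw]
    exact DifferentiableAt.fun_sum fun l _ => (diff_coordC l).fun_mul (hud l)
  -- first derivative of Eop f
  have hpdE : ∀ k : Fin n, pd k (Eop f) x
      = pd k f x + ∑ l, (x l : ℂ) * pd k (pd l f) x := by
    intro k
    rw [hErw, pd_sum _ _ k (fun l _ => (diff_coordC l).fun_mul (hud l))]
    have h2 : ∀ l : Fin n, pd k (fun z : Fin n → ℝ => ((z l : ℝ) : ℂ) * pd l f z) x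
        = (x l : ℂ) * pd k (pd l f) x + pd l f x * (if l = k then 1 else 0) := by
      intro l
      rw [pd_mul k (diff_coordC l) (hud l), pd_coordC]
    rw [Finset.sum_congr rfl fun l _ => h2 l]
    simp [Finset.sum_add_distrib, mul_ite, Finset.sum_ite_eq']
    ring
  -- rewriting Mop j f as a combination
  have hMrw : ∀ j : Fin n, (Mop j f) = fun y =>
      (fun z : Fin n → ℝ => ((n : ℂ) - 2) * ((z j : ℝ) : ℂ)) y * f y
      - (fun z : Fin n → ℝ => ((r2 z : ℝ) : ℂ)) y * pd j f y
      + (fun z : Fin n → ℝ => 2 * ((z j : ℝ) : ℂ)) y * Eop f y := by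
    intro j; funext y; simp only [Mop]
  have d1 : ∀ j : Fin n, DifferentiableAt ℝ (fun z : Fin n → ℝ => ((n : ℂ) - 2) * ((z j : ℝ) : ℂ)) x :=
    fun j => (diff_coordC j).const_mul _
  have d3 : ∀ j : Fin n, DifferentiableAt ℝ (fun z : Fin n → ℝ => 2 * ((z j : ℝ) : ℂ)) x :=
    fun j => (diff_coordC j).const_mul _
  -- derivative of Mop j f
  have hpdM : ∀ j k : Fin n, pd k (Mop j f) x =
      ((((n : ℂ) - 2) * (x j : ℂ)) * pd k f x + f x * (((n : ℂ) - 2) * (if j = k then 1 else 0)))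
      - (((r2 x : ℝ) : ℂ) * pd k (pd j f) x + pd j f x * (2 * (x k : ℂ)))
      + ((2 * (x j : ℂ)) * pd k (Eop f) x + Eop f x * (2 * (if j = k then 1 else 0))) := by
    intro j k
    rw [hMrw j,
      pd_comb k ((d1 j).fun_mul hfd) (diff_r2C.fun_mul (hud j)) ((d3 j).fun_mul hEd),
      pd_mul k (d1 j) hfd, pd_mul k diff_r2C (hud j), pd_mul k (d3 j) hEd,
      pd_const_mul _ k (diff_coordC j), pd_const_mul _ k (diff_coordC j),
      pd_coordC, pd_r2C]
  -- sum over k of c_k * pd k (Mop j f)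
  have hG : ∀ j : Fin n, (∑ k, (x k : ℂ) * pd k (Mop j f) x) =
      (((n : ℂ) - 2) * (x j : ℂ)) * Eop f x
      + (((n : ℂ) - 2) * f x + 2 * Eop f x) * (x j : ℂ)
      - ((r2 x : ℝ) : ℂ) * (∑ k, (x k : ℂ) * pd k (pd j f) x)
      - (2 * pd j f x) * ((r2 x : ℝ) : ℂ)
      + (2 * (x j : ℂ)) * (∑ k, (x k : ℂ) * pd k (Eop f) x) := by
    intro j
    have hsummand : ∀ k : Fin n, (x k : ℂ) * pd k (Mop j f) x =
        (((n : ℂ) - 2) * (x j : ℂ)) * ((x k : ℂ) * pd k f x)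
        + (if j = k then (((n : ℂ) - 2) * f x + 2 * Eop f x) * (x k : ℂ) else 0)
        - ((r2 x : ℝ) : ℂ) * ((x k : ℂ) * pd k (pd j f) x)
        - (2 * pd j f x) * ((x k : ℂ) * (x k : ℂ))
        + (2 * (x j : ℂ)) * ((x k : ℂ) * pd k (Eop f) x) := by
      intro k
      rw [hpdM j k]
      by_cases h : j = k
      · subst h
        rw [if_pos rfl, if_pos rfl]
        ring
      · simp only [if_neg h]; ring
    rw [Finset.sum_congr rfl fun k _ => hsummand k]
    simp only [Finset.sum_add_distrib, Finset.sum_sub_distrib, ← Finset.mul_sum,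
      Finset.sum_ite_eq, Finset.mem_univ, if_true, hR]
    simp only [Eop]
  -- the per-j formula for Mop j (Mop j f) x
  have hA : ∀ j : Fin n, Mop j (Mop j f) x =
      ((((n:ℂ)-2)^2 * f x + 2*((n:ℂ)-2)*f x + 4*((n:ℂ)-2)*Eop f x + 4*Eop f x
          + 4 * (∑ k, (x k : ℂ) * pd k (Eop f) x)) * ((x j : ℂ) * (x j : ℂ)))
      + ((-(2*((n:ℂ)-2)) - 2) * ((r2 x : ℝ) : ℂ)) * ((x j : ℂ) * pd j f x)
      + (-(((n:ℂ)-2) * f x + 2 * Eop f x) * ((r2 x : ℝ) : ℂ))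
      + ((r2 x : ℝ) : ℂ)^2 * pd j (pd j f) x
      + (-(2*((r2 x : ℝ) : ℂ))) * ((x j : ℂ) * pd j (Eop f) x)
      + (-(2*((r2 x : ℝ) : ℂ))) * ((x j : ℂ) * ∑ k, (x k : ℂ) * pd k (pd j f) x) := by
    intro j
    have h0 : Mop j (Mop j f) x =
        ((n : ℂ) - 2) * (x j : ℂ) * Mop j f x
        - ((r2 x : ℝ) : ℂ) * pd j (Mop j f) x
        + 2 * (x j : ℂ) * ∑ k, (x k : ℂ) * pd k (Mop j f) x := rfl
    rw [h0, hG j, hpdM j j, if_pos rfl]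
    simp only [Mop]
    ring
  rw [Finset.sum_congr rfl fun j _ => hA j]
  -- linearity
  simp only [Finset.sum_add_distrib, ← Finset.mul_sum, Finset.sum_const, Finset.card_univ,
    Fintype.card_fin, nsmul_eq_mul, hR]
  -- identify the remaining sums
  have hCE : (∑ k, (x k : ℂ) * pd k (Eop f) x)
      = Eop f x + ∑ k, (x k : ℂ) * ∑ l, (x l : ℂ) * pd k (pd l f) x := by
    rw [Finset.sum_congr rfl fun k _ => by rw [hpdE k]]
    simp only [mul_add, Finset.sum_add_distrib]
    rfl
  have hT : (∑ j, (x j : ℂ) * ∑ k, (x k : ℂ) * pd k (pd j f) x)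
      = ∑ k, (x k : ℂ) * ∑ l, (x l : ℂ) * pd k (pd l f) x := by
    simp only [Finset.mul_sum]
    rw [Finset.sum_comm]
    apply Finset.sum_congr rfl; intro k _
    apply Finset.sum_congr rfl; intro l _
    ring
  rw [hCE, hT]
  have hE0 : (∑ i : Fin n, ((x i : ℝ) : ℂ) * pd i f x) = Eop f x := rfl
  rw [hE0]
  ring


end Helpers

/-- `Σⱼ Kⱼ f = r⁴ · Hf` on Ω; in particular `Σⱼ Kⱼ f = 0` on the null space of `H`. -/
theorem sum_K_eq_r4_H
    (n : ℕ) (hn : 2 ≤ n) (a : Fin n → ℂ)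
    (f : (Fin n → ℝ) → ℂ) (hf : ContDiffOn ℝ (⊤ : ℕ∞) f (Omega n)) :
    (∀ x ∈ Omega n,
      ∑ j : Fin n, Kop a j f x = ((r2 x : ℂ)) ^ 2 * Hop a f x) ∧
    ((∀ x ∈ Omega n, Hop a f x = 0) →
      ∀ x ∈ Omega n, ∑ j : Fin n, Kop a j f x = 0) := by
  have key : ∀ x ∈ Omega n,
      ∑ j : Fin n, Kop a j f x = ((r2 x : ℂ)) ^ 2 * Hop a f x := by
    intro x hx
    have hxn : Omega n ∈ nhds x := (isOpen_Omega n).mem_nhds hx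
    have hct : ContDiffAt ℝ (⊤ : ℕ∞) f x := hf.contDiffAt hxn
    have hfd : DifferentiableAt ℝ f x := hct.differentiableAt (by simp)
    have hud : ∀ k : Fin n, DifferentiableAt ℝ (pd k f) x := by
      intro k
      have h1 : ContDiffAt ℝ (⊤ : ℕ∞) (fderiv ℝ f) x := hct.fderiv_right (by simp)
      have h2 : DifferentiableAt ℝ (fderiv ℝ f) x := h1.differentiableAt (by simp)
      exact h2.clm_apply (differentiableAt_const _)
    have hmain := main_sum f hfd hud
    simp only [Kop, Hop, Finset.sum_add_distrib, mul_add]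
    rw [hmain]
    congr 1
    rw [Finset.mul_sum]
    exact Finset.sum_congr rfl fun j _ => by ring
  refine ⟨key, fun hH x hx => ?_⟩
  rw [key x hx, hH x hx, mul_zero]
end
end

section
/- Let x₁,…,x₅, p₁,…,p₅ ∈ ℂ satisfy the null-cone condition x₁² + x₂² + x₃² + x₄² + x₅² = 0 and the restriction x₁p₁ + x₂p₂ + x₃p₃ + x₄p₄ + x₅p₅ = 0. Define p_x = −(x₄ + i x₅) p₁ + x₁ (p₄ + i p₅), p_y = −(x₄ + i x₅) p₂ + x₂ (p₄ + i p₅), p_z = −(x₄ + i x₅) p₃ + x₃ (p₄ + i p₅). Then the free Hamiltonian satisfies p_x² + p_y² + p_z² = (x₄ + i x₅)² (p₁² + p₂² + p₃² + p₄² + p₅²). -/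
/-!
Pass to light-cone coordinates `a = x₄ + i x₅`, `c = x₄ - i x₅` (and `b`, `d` likewise
for the momenta), so that `x₄² + x₅² = a c` and `2 (x₄p₄ + x₅p₅) = a d + b c`.
Expanding `Σₖ (b xₖ - a pₖ)²` over `k ≤ 3` and eliminating `Σ xₖ²` and `Σ xₖpₖ` with the
two constraints leaves `a² (Σ pₖ² + b d)`.
-/

open Matrix

section NullCone

variable {R ι : Type*} [CommRing R] [Fintype ι]

theorem dotProduct_smul_sub_smul_self (u v : ι → R) (a b : R) :
    (b • u - a • v) ⬝ᵥ (b • u - a • v)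
      = b ^ 2 * (u ⬝ᵥ u) - 2 * a * b * (u ⬝ᵥ v) + a ^ 2 * (v ⬝ᵥ v) := by
  simp only [sub_dotProduct, dotProduct_sub, smul_dotProduct, dotProduct_smul,
    dotProduct_comm v u, smul_eq_mul]
  ring

theorem dotProduct_smul_sub_smul_self_of_lightCone {u v : ι → R} {a b c d : R}
    (hcone : u ⬝ᵥ u + a * c = 0) (hres : 2 * (u ⬝ᵥ v) + (a * d + b * c) = 0) :
    (b • u - a • v) ⬝ᵥ (b • u - a • v) = a ^ 2 * (v ⬝ᵥ v + b * d) := by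
  rw [dotProduct_smul_sub_smul_self]
  linear_combination b ^ 2 * hcone - a * b * hres

theorem dotProduct_smul_sub_smul_self_of_nullCone {i : R} (hi : i ^ 2 = -1)
    {u v : ι → R} {x₄ x₅ p₄ p₅ : R}
    (hcone : u ⬝ᵥ u + x₄ ^ 2 + x₅ ^ 2 = 0)
    (hres : u ⬝ᵥ v + x₄ * p₄ + x₅ * p₅ = 0) :
    ((p₄ + i * p₅) • u - (x₄ + i * x₅) • v)
        ⬝ᵥ ((p₄ + i * p₅) • u - (x₄ + i * x₅) • v)
      = (x₄ + i * x₅) ^ 2 * (v ⬝ᵥ v + p₄ ^ 2 + p₅ ^ 2) := by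
  have hcone' : u ⬝ᵥ u + (x₄ + i * x₅) * (x₄ - i * x₅) = 0 := by
    linear_combination hcone - x₅ ^ 2 * hi
  have hres' : 2 * (u ⬝ᵥ v)
      + ((x₄ + i * x₅) * (p₄ - i * p₅) + (p₄ + i * p₅) * (x₄ - i * x₅)) = 0 := by
    linear_combination 2 * hres - 2 * x₅ * p₅ * hi
  rw [dotProduct_smul_sub_smul_self_of_lightCone hcone' hres']
  linear_combination -(x₄ + i * x₅) ^ 2 * p₅ ^ 2 * hi

end NullCone

/-- On the null cone `Σ xₖ² = 0` with the restriction `Σ xₖpₖ = 0`, the flat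
free Hamiltonian satisfies
`p_x² + p_y² + p_z² = (x₄+ix₅)²(p₁²+p₂²+p₃²+p₄²+p₅²)`. -/
theorem pentaspherical_free_hamiltonian
    (x1 x2 x3 x4 x5 p1 p2 p3 p4 p5 : ℂ)
    (hcone : x1 ^ 2 + x2 ^ 2 + x3 ^ 2 + x4 ^ 2 + x5 ^ 2 = 0)
    (hres : x1 * p1 + x2 * p2 + x3 * p3 + x4 * p4 + x5 * p5 = 0) :
    (-(x4 + Complex.I * x5) * p1 + x1 * (p4 + Complex.I * p5)) ^ 2
      + (-(x4 + Complex.I * x5) * p2 + x2 * (p4 + Complex.I * p5)) ^ 2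
      + (-(x4 + Complex.I * x5) * p3 + x3 * (p4 + Complex.I * p5)) ^ 2
      = (x4 + Complex.I * x5) ^ 2
        * (p1 ^ 2 + p2 ^ 2 + p3 ^ 2 + p4 ^ 2 + p5 ^ 2) := by
  have hcone' : ![x1, x2, x3] ⬝ᵥ ![x1, x2, x3] + x4 ^ 2 + x5 ^ 2 = 0 := by
    simpa only [dotProduct, Fin.sum_univ_three, cons_val_zero, cons_val_one, cons_val, ← sq]
      using hcone
  have hres' : ![x1, x2, x3] ⬝ᵥ ![p1, p2, p3] + x4 * p4 + x5 * p5 = 0 := by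
    simpa only [dotProduct, Fin.sum_univ_three, cons_val_zero, cons_val_one, cons_val]
      using hres
  have key := dotProduct_smul_sub_smul_self_of_nullCone Complex.I_sq hcone' hres'
  simp only [dotProduct, smul_cons, smul_eq_mul, smul_empty, Pi.sub_apply, Fin.sum_univ_three,
    cons_val_zero, cons_val_one, cons_val] at key
  linear_combination key
end
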